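/- arXiv:1804.10388 — 3 statements merged into one kernel-verified Lean document; each statement's English description precedes it below -/
import Mathlib

section
/- Theorem 1 (waiting-time distribution of an absorbing Markov chain): for every integer n ≥ 1 and every initial distribution ξ on Q∖A, the first-passage probability F(ξ, n) — the finite sum, over all state sequences y_0, …, y_n in Q with y_i ∉ A for all i < n and y_n ∈ A, of ξ(y_0) · ∏_{i<n} Π(y_i, y_{i+1}) — equals the scalar ξᵀ · N^{n−1} · (I − N) · 𝟙. -/
open Matrix BigOperators Finset

section Aux
variable {Q : Type*} [Fintype Q] [DecidableEq Q]

noncomputable def Hfun (A : Finset Q) (Pi : Q → Q → ℝ) : ℕ → Q → ℝ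
  | 0, p => if p ∈ A then 1 else 0
  | (m+1), p => if p ∈ A then 0 else ∑ q, Pi p q * Hfun A Pi m q

lemma path_sum (A : Finset Q) (Pi : Q → Q → ℝ) (n : ℕ) (w : Q → ℝ) :
    (∑ y ∈ univ.filter (fun y : Fin (n + 1) → Q =>
        (∀ i : Fin n, y i.castSucc ∉ A) ∧ y (Fin.last n) ∈ A),
      w (y 0) * ∏ i : Fin n, Pi (y i.castSucc) (y i.succ)) =
    ∑ p : Q, w p * Hfun A Pi n p := by
  induction n generalizing w with
  | zero =>
    rw [Finset.sum_filter, ← Equiv.sum_comp (Equiv.funUnique (Fin 1) Q).symm]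
    simp [Hfun, mul_comm]
  | succ n ih =>
    rw [Finset.sum_filter, ← Equiv.sum_comp (Fin.consEquiv fun _ : Fin (n+2) => Q),
      Fintype.sum_prod_type]
    refine Finset.sum_congr rfl fun q _ => ?_
    show (∑ z : Fin (n+1) → Q, _) = w q * Hfun A Pi (n+1) q
    simp only [Fin.consEquiv_apply, Fin.forall_fin_succ, Fin.castSucc_zero, Fin.cons_zero,
      Fin.cons_succ, Fin.prod_univ_succ, ← Fin.succ_castSucc, ← Fin.succ_last]
    by_cases hq : q ∈ A
    · simp [Hfun, hq]
    · simp only [hq, not_false_iff, true_and, Hfun, if_neg hq]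
      have h2 : ∀ x : Fin (n+1) → Q,
          w q * (Pi q (x 0) * ∏ i : Fin n, Pi (x i.castSucc) (x i.succ)) =
          (w q * Pi q (x 0)) * ∏ i : Fin n, Pi (x i.castSucc) (x i.succ) := by
        intro x; ring
      simp only [h2, ← Finset.sum_filter]
      rw [ih (fun r => w q * Pi q r)]
      simp only [if_false, Finset.mul_sum]
      exact Finset.sum_congr rfl fun r _ => by ring
end Aux

section Aux2
variable {Q : Type*} [Fintype Q] [DecidableEq Q]

lemma Hfun_matrix (A : Finset Q) (Pi : Q → Q → ℝ) (hrow : ∀ p, ∑ q, Pi p q = 1)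
    (N : Matrix {q : Q // q ∉ A} {q : Q // q ∉ A} ℝ)
    (hN : ∀ p r, N p r = Pi p.1 r.1) :
    ∀ (m : ℕ) (p : {q : Q // q ∉ A}),
      Hfun A Pi (m + 1) p.1 = ((N ^ m * (1 - N)) *ᵥ (fun _ => (1 : ℝ))) p := by
  intro m
  induction m with
  | zero =>
    intro p
    have hsub : ∑ r : {q : Q // q ∉ A}, Pi p.1 r.1 = ∑ q ∈ Aᶜ, Pi p.1 q := by
      rw [← Finset.sum_subtype Aᶜ (fun x => Finset.mem_compl) (fun q => Pi p.1 q)]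
    have hsplit : ∑ q ∈ A, Pi p.1 q + ∑ q ∈ Aᶜ, Pi p.1 q = 1 := by
      rw [Finset.sum_add_sum_compl]; exact hrow p.1
    simp only [pow_zero, one_mul, mulVec, dotProduct, Matrix.sub_apply, Matrix.one_apply,
      mul_one]
    rw [Finset.sum_sub_distrib]
    simp only [Finset.sum_ite_eq, Finset.mem_univ, if_true]
    simp only [Hfun, if_neg p.2]
    have : ∑ q : Q, Pi p.1 q * (if q ∈ A then (1:ℝ) else 0) = ∑ q ∈ A, Pi p.1 q := by
      simp [mul_ite, Finset.sum_ite_mem]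
    rw [this]
    have hNs : ∑ r : {q : Q // q ∉ A}, N p r = ∑ q ∈ Aᶜ, Pi p.1 q := by
      simp only [hN]; exact hsub
    rw [hNs]; linarith
  | succ m ih =>
    intro p
    have step : Hfun A Pi (m + 2) p.1 = ∑ r : {q : Q // q ∉ A}, Pi p.1 r.1 * Hfun A Pi (m+1) r.1 := by
      show (if p.1 ∈ A then 0 else ∑ q, Pi p.1 q * Hfun A Pi (m+1) q) = _
      rw [if_neg p.2]
      rw [← Finset.sum_subtype Aᶜ (fun x => Finset.mem_compl)
        (fun q => Pi p.1 q * Hfun A Pi (m+1) q)]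
      rw [← Finset.sum_compl_add_sum A (fun q => Pi p.1 q * Hfun A Pi (m+1) q)]
      have : ∑ q ∈ A, Pi p.1 q * Hfun A Pi (m+1) q = 0 := by
        refine Finset.sum_eq_zero fun q hq => ?_
        show Pi p.1 q * (if q ∈ A then 0 else _) = 0
        rw [if_pos hq, mul_zero]
      rw [this, add_zero]
    rw [step]
    have : ∀ r : {q : Q // q ∉ A}, Hfun A Pi (m+1) r.1 = ((N ^ m * (1 - N)) *ᵥ (fun _ => (1:ℝ))) r :=
      ih
    simp_rw [this]
    have lhs : (∑ r : {q : Q // q ∉ A}, Pi p.1 r.1 * ((N ^ m * (1 - N)) *ᵥ fun _ => (1:ℝ)) r)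
        = (N *ᵥ ((N ^ m * (1 - N)) *ᵥ fun _ => (1:ℝ))) p := by
      rw [mulVec, dotProduct]
      simp only [hN]
    rw [lhs, mulVec_mulVec, ← mul_assoc, ← pow_succ']
end Aux2

/-- **Theorem 1 (waiting-time distribution of an absorbing Markov chain).**
For every `n ≥ 1` and every initial distribution `ξ` on the non-final states
(extended by `0` on the final states `A`), the first-passage probability
`F(ξ, n)` — the sum over all state sequences `y₀, …, yₙ` with `yᵢ ∉ A` for all
`i < n` and `yₙ ∈ A` of `ξ(y₀) · ∏_{i<n} Π(yᵢ, yᵢ₊₁)` — equals the scalar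
`ξᵀ · N^(n-1) · (I - N) · 𝟙`. -/
theorem waiting_time_distribution
    {Q : Type*} [Fintype Q] [DecidableEq Q]
    (A : Finset Q) (hA : A.Nonempty) (hAc : ∃ q, q ∉ A)
    (Pi : Q → Q → ℝ)
    (hnn : ∀ p q, 0 ≤ Pi p q) (hrow : ∀ p, ∑ q, Pi p q = 1)
    (N : Matrix {q : Q // q ∉ A} {q : Q // q ∉ A} ℝ)
    (hN : ∀ p r, N p r = Pi p.1 r.1)
    (ξ : {q : Q // q ∉ A} → ℝ)
    (hξnn : ∀ q, 0 ≤ ξ q) (hξsum : ∑ q, ξ q = 1)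
    (n : ℕ) (hn : 1 ≤ n) :
    (∑ y ∈ univ.filter (fun y : Fin (n + 1) → Q =>
        (∀ i : Fin n, y i.castSucc ∉ A) ∧ y (Fin.last n) ∈ A),
      (if h : y 0 ∈ A then 0 else ξ ⟨y 0, h⟩) *
        ∏ i : Fin n, Pi (y i.castSucc) (y i.succ)) =
    ∑ q : {q : Q // q ∉ A},
      ξ q * ((N ^ (n - 1) * (1 - N)) *ᵥ (fun _ => (1 : ℝ))) q := by
  obtain ⟨m, rfl⟩ : ∃ m, n = m + 1 := ⟨n - 1, (Nat.succ_pred_eq_of_pos hn).symm⟩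
  rw [path_sum A Pi (m + 1) (fun p => if h : p ∈ A then 0 else ξ ⟨p, h⟩)]
  rw [← Finset.sum_compl_add_sum A
    (fun p => (if h : p ∈ A then 0 else ξ ⟨p, h⟩) * Hfun A Pi (m + 1) p)]
  have hz : ∑ p ∈ A, (if h : p ∈ A then 0 else ξ ⟨p, h⟩) * Hfun A Pi (m + 1) p = 0 := by
    refine Finset.sum_eq_zero fun p hp => ?_
    rw [dif_pos hp, zero_mul]
  rw [hz, add_zero,
    Finset.sum_subtype Aᶜ (fun x => Finset.mem_compl)
      (fun p => (if h : p ∈ A then 0 else ξ ⟨p, h⟩) * Hfun A Pi (m + 1) p)]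
  refine Finset.sum_congr rfl fun p _ => ?_
  rw [dif_neg p.2, Hfun_matrix A Pi hrow N hN m p]
  simp
end

section
/- Pattern Markov Chain factorization: for every natural number n and every state sequence q : {0,…,n} → Q with q(0) = q₀, the finite sum, over all words w : {0,…,n−1} → Σ whose induced state sequence y_w equals q (that is, y_w(i) = q(i) for all 0 ≤ i ≤ n), of ∏_{i<n} μ(w(i)), equals ∏_{i<n} Π(q(i), q(i+1)), where Π(p, r) = ∑_{e ∈ Σ : δ(p,e) = r} μ(e). -/
open Matrix BigOperators Finset

/-- The state sequence induced by a word `w : Fin n → E` read by the automaton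
with transition function `δ` starting at `q₀`: `runAux δ q₀ w 0 = q₀` and
`runAux δ q₀ w (k+1) = δ (runAux δ q₀ w k) (w k)` for `k < n`. -/
def runAux {E Q : Type*} (δ : Q → E → Q) (q₀ : Q) {n : ℕ} (w : Fin n → E) : ℕ → Q
  | 0 => q₀
  | k + 1 => if h : k < n then δ (runAux δ q₀ w k) (w ⟨k, h⟩) else runAux δ q₀ w k

lemma runAux_snoc_le {E Q : Type*} (δ : Q → E → Q) (q₀ : Q) {n : ℕ} (w : Fin n → E) (e : E) :
    ∀ k, k ≤ n → runAux δ q₀ (Fin.snoc w e) k = runAux δ q₀ w k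
  | 0, _ => rfl
  | k + 1, h => by
      have hk : k < n := h
      have hW : (Fin.snoc w e : Fin (n+1) → E) ⟨k, Nat.lt_succ_of_lt hk⟩ = w ⟨k, hk⟩ := by
        have : (⟨k, Nat.lt_succ_of_lt hk⟩ : Fin (n+1)) = Fin.castSucc ⟨k, hk⟩ := rfl
        rw [this, Fin.snoc_castSucc]
      simp only [runAux, hk, Nat.lt_succ_of_lt hk, dif_pos, hW,
        runAux_snoc_le δ q₀ w e k hk.le]

lemma runAux_snoc_last {E Q : Type*} (δ : Q → E → Q) (q₀ : Q) {n : ℕ} (w : Fin n → E) (e : E) :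
    runAux δ q₀ (Fin.snoc w e) (n + 1) = δ (runAux δ q₀ w n) e := by
  have hW : (Fin.snoc w e : Fin (n+1) → E) ⟨n, Nat.lt_succ_self n⟩ = e := by
    have : (⟨n, Nat.lt_succ_self n⟩ : Fin (n+1)) = Fin.last n := rfl
    rw [this, Fin.snoc_last]
  simp only [runAux, Nat.lt_succ_self, dif_pos, hW,
    runAux_snoc_le δ q₀ w e n le_rfl]

/-- **Pattern Markov Chain factorization.** For every `n` and every state
sequence `q : Fin (n+1) → Q` with `q 0 = q₀`, the sum over all words
`w : Fin n → E` whose induced state sequence equals `q` of `∏_{i<n} μ(wᵢ)`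
equals `∏_{i<n} Π(qᵢ, qᵢ₊₁)`, where `Π(p, r) = ∑_{e : δ(p,e) = r} μ(e)`. -/
theorem pmc_factorization
    {E Q : Type*} [Fintype E] [Fintype Q] [DecidableEq Q]
    (μ : E → ℝ) (hμnn : ∀ e, 0 ≤ μ e) (hμsum : ∑ e, μ e = 1)
    (δ : Q → E → Q) (q₀ : Q)
    (n : ℕ) (q : Fin (n + 1) → Q) (hq0 : q 0 = q₀) :
    (∑ w ∈ univ.filter
        (fun w : Fin n → E => ∀ i : Fin (n + 1), runAux δ q₀ w i.val = q i),
      ∏ i : Fin n, μ (w i)) =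
    ∏ i : Fin n,
      ∑ e ∈ univ.filter (fun e => δ (q i.castSucc) e = q i.succ), μ e := by
  induction n with
  | zero =>
      have hfilt : (univ.filter
          (fun w : Fin 0 → E => ∀ i : Fin 1, runAux δ q₀ w i.val = q i)) = univ := by
        refine filter_true_of_mem fun w _ i => ?_
        have : i = 0 := Subsingleton.elim i 0
        subst this
        simpa [runAux] using hq0.symm
      rw [hfilt]
      simp
  | succ n ih =>
      set q' : Fin (n + 1) → Q := fun i => q i.castSucc with hq'
      have hq'0 : q' 0 = q₀ := hq0
      -- condition splitting
      have hcond : ∀ (w : Fin n → E) (e : E),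
          (∀ i : Fin (n + 2), runAux δ q₀ (Fin.snoc w e) i.val = q i) ↔
          ((∀ i : Fin (n + 1), runAux δ q₀ w i.val = q' i) ∧
            δ (q' (Fin.last n)) e = q (Fin.last (n + 1))) := by
        intro w e
        constructor
        · intro h
          have h1 : ∀ i : Fin (n + 1), runAux δ q₀ w i.val = q' i := by
            intro i
            have := h i.castSucc
            rwa [show (i.castSucc : Fin (n+2)).val = i.val from rfl,
              runAux_snoc_le δ q₀ w e i.val (Nat.lt_succ_iff.mp i.isLt)] at this
          refine ⟨h1, ?_⟩
          have hlast := h (Fin.last (n + 1))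
          rw [show (Fin.last (n+1)).val = n + 1 from rfl, runAux_snoc_last] at hlast
          have hn : runAux δ q₀ w n = q' (Fin.last n) := h1 (Fin.last n)
          rwa [hn] at hlast
          
        · rintro ⟨h1, h2⟩ i
          rcases Nat.lt_succ_iff_lt_or_eq.mp i.isLt with hi | hi
          · rw [runAux_snoc_le δ q₀ w e i.val (Nat.lt_succ_iff.mp hi)]
            have h3 := h1 ⟨i.val, hi⟩
            have h4 : (⟨i.val, hi⟩ : Fin (n+1)).castSucc = i := by ext; rfl
            rw [hq'] at h3
            simp only at h3
            rw [h4] at h3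
            exact h3
          · have hi' : i = Fin.last (n + 1) := Fin.ext hi
            subst hi'
            have h3 : runAux δ q₀ w n = q' (Fin.last n) := h1 (Fin.last n)
            rw [show (Fin.last (n+1)).val = n + 1 from rfl, runAux_snoc_last, h3]
            exact h2
      -- rewrite LHS as a sum over pairs
      rw [Finset.sum_filter]
      rw [← Equiv.sum_comp (Fin.snocEquiv (fun _ => E))]
      rw [Fintype.sum_prod_type]
      have hterm : ∀ (e : E) (w : Fin n → E),
          (if ∀ i : Fin (n + 2),
              runAux δ q₀ ((Fin.snocEquiv (fun _ => E)) (e, w)) i.val = q i then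
            ∏ i : Fin (n + 1), μ ((Fin.snocEquiv (fun _ => E)) (e, w) i)
          else 0) =
          (if ∀ i : Fin (n + 1), runAux δ q₀ w i.val = q' i then
            ∏ i : Fin n, μ (w i) else 0) *
          (if δ (q' (Fin.last n)) e = q (Fin.last (n + 1)) then μ e else 0) := by
        intro e w
        have hsnoc : ((Fin.snocEquiv (fun _ => E)) (e, w) : Fin (n+1) → E) = Fin.snoc w e := rfl
        rw [hsnoc]
        have hprod : (∏ i : Fin (n + 1), μ ((Fin.snoc w e : Fin (n+1) → E) i)) =
            (∏ i : Fin n, μ (w i)) * μ e := by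
          rw [Fin.prod_univ_castSucc]
          simp
        by_cases h1 : ∀ i : Fin (n + 1), runAux δ q₀ w i.val = q' i
        · by_cases h2 : δ (q' (Fin.last n)) e = q (Fin.last (n + 1))
          · rw [if_pos ((hcond w e).mpr ⟨h1, h2⟩), if_pos h1, if_pos h2, hprod]
          · rw [if_neg (fun h => h2 ((hcond w e).mp h).2), if_pos h1, if_neg h2, mul_zero]
          
        · rw [if_neg (fun h => h1 ((hcond w e).mp h).1), if_neg h1, zero_mul]
      simp only [hterm]
      rw [Finset.sum_comm]
      have : ∀ w : Fin n → E,
          ∑ e : E, (if ∀ i : Fin (n + 1), runAux δ q₀ w i.val = q' i then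
              ∏ i : Fin n, μ (w i) else 0) *
            (if δ (q' (Fin.last n)) e = q (Fin.last (n + 1)) then μ e else 0) =
          (if ∀ i : Fin (n + 1), runAux δ q₀ w i.val = q' i then
              ∏ i : Fin n, μ (w i) else 0) *
          ∑ e ∈ univ.filter (fun e => δ (q' (Fin.last n)) e = q (Fin.last (n + 1))), μ e := by
        intro w
        rw [← Finset.mul_sum, Finset.sum_filter]
      simp only [this]
      rw [← Finset.sum_mul, ← Finset.sum_filter, ih q' hq'0]
      rw [Fin.prod_univ_castSucc]
      congr 1
end

section
/- Maximum likelihood estimation of a Markov transition matrix: let n : Q → Q → ℕ be transition counts over a finite type Q, and for each state i let n_i = ∑_j n(i,j). Then for every row-stochastic matrix π : Q → Q → ℝ (π(i,j) ≥ 0 for all i, j and ∑_j π(i,j) = 1 for every i), the likelihood satisfies ∏_{(i,j) : n(i,j) > 0} π(i,j)^{n(i,j)} ≤ ∏_{(i,j) : n(i,j) > 0} (n(i,j)/n_i)^{n(i,j)}; that is, the empirical transition matrix π̂(i,j) = n(i,j)/n_i maximizes the likelihood of the observed transition counts. -/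
open BigOperators Finset

lemma row_ineq {J : Type*} [Fintype J] (m : J → ℕ) (p : J → ℝ)
    (hp : ∀ j, 0 ≤ p j) (hsum : ∑ j, p j = 1) :
    ∏ j ∈ univ.filter (fun j => 0 < m j), p j ^ m j ≤
      ∏ j ∈ univ.filter (fun j => 0 < m j),
        ((m j : ℝ) / ((∑ j, m j : ℕ) : ℝ)) ^ m j := by
  set s := univ.filter (fun j => 0 < m j) with hs
  rcases s.eq_empty_or_nonempty with h | h
  · simp [h]
  have hNs : ∑ j ∈ s, m j = ∑ j, m j :=
    Finset.sum_subset (Finset.subset_univ s) (by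
      intro j _ hj
      simp only [hs, mem_filter, mem_univ, true_and, ] at hj
      omega)
  set N : ℕ := ∑ j, m j with hN
  have hNpos : 0 < N := by
    obtain ⟨j, hj⟩ := h
    simp only [hs, mem_filter, mem_univ, true_and] at hj
    rw [← hNs]
    exact lt_of_lt_of_le hj (Finset.single_le_sum (fun _ _ => Nat.zero_le _) (by exact (hs ▸ mem_filter.mpr ⟨mem_univ j, hj⟩)))
  have hNR : (0:ℝ) < N := by exact_mod_cast hNpos
  set w : J → ℝ := fun j => (m j : ℝ) / N with hw
  have hwpos : ∀ j ∈ s, 0 < w j := by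
    intro j hj
    simp only [hs, mem_filter, mem_univ, true_and] at hj
    exact div_pos (by exact_mod_cast hj) hNR
  have hwsum : ∑ j ∈ s, w j = 1 := by
    rw [hw]
    rw [← Finset.sum_div]
    rw [div_eq_one_iff_eq (ne_of_gt hNR)]
    rw [← Nat.cast_sum, hNs]
  -- geometric mean inequality applied to z j = p j / w j
  have key := Real.geom_mean_le_arith_mean_weighted s w (fun j => p j / w j)
    (fun j hj => le_of_lt (hwpos j hj)) hwsum
    (fun j hj => div_nonneg (hp j) (le_of_lt (hwpos j hj)))
  have hsum' : ∑ j ∈ s, w j * (p j / w j) = ∑ j ∈ s, p j := by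
    apply Finset.sum_congr rfl
    intro j hj
    field_simp [ne_of_gt (hwpos j hj)]
  have hle1 : ∑ j ∈ s, p j ≤ 1 := by
    rw [← hsum]
    exact Finset.sum_le_sum_of_subset_of_nonneg (Finset.subset_univ s)
      (fun j _ _ => hp j)
  have key2 : ∏ j ∈ s, (p j / w j) ^ (w j : ℝ) ≤ 1 :=
    key.trans (by rw [hsum']; exact hle1)
  -- raise to power N
  have key3 : (∏ j ∈ s, (p j / w j) ^ (w j : ℝ)) ^ (N : ℕ) ≤ 1 := by
    calc (∏ j ∈ s, (p j / w j) ^ (w j : ℝ)) ^ (N : ℕ)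
        ≤ 1 ^ (N : ℕ) := by
          apply pow_le_pow_left₀ _ key2
          exact Finset.prod_nonneg fun j hj =>
            Real.rpow_nonneg (div_nonneg (hp j) (le_of_lt (hwpos j hj))) _
      _ = 1 := one_pow _
  have key4 : ∏ j ∈ s, (p j / w j) ^ (m j) ≤ 1 := by
    rw [← Finset.prod_pow] at key3
    convert key3 using 2 with j hj
    rw [← Real.rpow_natCast ((p j / w j) ^ (w j : ℝ)) N,
      ← Real.rpow_natCast (p j / w j) (m j),
      ← Real.rpow_mul (div_nonneg (hp j) (le_of_lt (hwpos j hj)))]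
    congr 1
    rw [hw]
    field_simp
  have hprodw : ∏ j ∈ s, w j ^ m j > 0 :=
    Finset.prod_pos fun j hj => pow_pos (hwpos j hj) _
  have : ∏ j ∈ s, (p j / w j) ^ m j = (∏ j ∈ s, p j ^ m j) / (∏ j ∈ s, w j ^ m j) := by
    rw [← Finset.prod_div_distrib]
    exact Finset.prod_congr rfl fun j hj => by rw [div_pow]
  rw [this, div_le_one hprodw] at key4
  exact key4

/-- **Maximum likelihood estimation of a Markov transition matrix.** Let
`n : Q → Q → ℕ` be transition counts with row totals `n_i = ∑ j, n i j`. For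
every row-stochastic matrix `π`, the likelihood satisfies
`∏_{(i,j) : n i j > 0} π(i,j)^(n i j) ≤ ∏_{(i,j) : n i j > 0} (n i j / n_i)^(n i j)`:
the empirical transition matrix maximizes the likelihood. -/
theorem mle_markov_transition_matrix
    {Q : Type*} [Fintype Q]
    (n : Q → Q → ℕ)
    (π : Q → Q → ℝ)
    (hnn : ∀ i j, 0 ≤ π i j) (hrow : ∀ i, ∑ j, π i j = 1) :
    ∏ ij ∈ univ.filter (fun ij : Q × Q => 0 < n ij.1 ij.2),
        π ij.1 ij.2 ^ n ij.1 ij.2 ≤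
      ∏ ij ∈ univ.filter (fun ij : Q × Q => 0 < n ij.1 ij.2),
        ((n ij.1 ij.2 : ℝ) / ((∑ j, n ij.1 j : ℕ) : ℝ)) ^ n ij.1 ij.2 := by
  have split : ∀ f : Q × Q → ℝ,
      ∏ ij ∈ univ.filter (fun ij : Q × Q => 0 < n ij.1 ij.2), f ij =
      ∏ i, ∏ j ∈ univ.filter (fun j => 0 < n i j), f (i, j) := by
    intro f
    rw [Finset.prod_filter]
    rw [Fintype.prod_prod_type]
    exact Finset.prod_congr rfl fun i _ => (Finset.prod_filter _ _).symm
  rw [split, split]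
  exact Finset.prod_le_prod
    (fun i _ => Finset.prod_nonneg fun j _ => pow_nonneg (hnn i j) _)
    (fun i _ => row_ineq (n i) (π i) (hnn i) (hrow i))
end
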